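/- Let ℓ ≥ 3 be an integer and let F be an ℓ-independent k-width-family of Fin m with every G_i satisfying G_i ≠ ∅ and G_i ≠ Fin m. Fix indices i*, j* ∈ [k] and vectors b₃, b₄ ∈ {0,1}^k, matrices C₃, C₄ ∈ {0,1}^{k×k} with b₃(i*) = b₄(i*) = 1, C₃(i*, j*) = 0, C₄(i*, j*) = 1, and set v₃ = v^ℓ_{F[b₃,C₃]} and v₄ = v^ℓ_{F[b₄,C₄]}. Let (f, p_A, p_B, p_C) be a three-bidder auction rule whose valuation class for bidder A contains all single-minded valuations, and let M : Finset (Fin m) → ℝ be nondecreasing with M(∅) = 0 such that M is a menu for bidder A at the profile (v₃, v₃). Write v* for the single-minded valuation with value (√3 − 1)·ℓ on bundles containing (G_{i*})ᶜ and 0 elsewhere. If M((G_{i*})ᶜ) > (√3 − 1)·ℓ, then: (a) the welfare of f on the profile (v*, v₃, v₃) is at most ℓ; and (b) there exist pairwise disjoint bundles (S_A, S_B, S_C) with v*(S_A) + v₃(S_B) + v₄(S_C) ≥ (√3 − 1)·ℓ + 2(ℓ − 1). -/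

import Mathlib

/-!
Comparing with the empty bundle, bidder A never takes a bundle whose utility is negative, so
the single-minded bidder `v*`, whose value `(√3 - 1)ℓ` is below the price of every bundle
containing `(G_{i*})ᶜ`, ends up with a bundle worth `0`. The two copies of `v₃` then hold
disjoint bundles, and `v_S^ℓ(X) + v_S^ℓ(Y) ≤ ℓ` whenever `X` and `Y` are disjoint.

For the second claim, the `(i*, j*)` members of `F[b₃, C₃]` and `F[b₄, C₄]` have the disjoint
complements `G_{i*} \ H^{(1)}_{i*,j*}` and `H^{(1)}_{i*,j*}`, both inside `G_{i*}`. By sparsity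
the complement of a member needs `ℓ - 1` members to be covered, while the member itself needs
one, so each of these complements is worth at least `ℓ - 1`.
-/

/-- A collection of bundles of `Fin m`, indexed by `ι`, is `ℓ`-sparse if the union of any
`ℓ - 1` (not necessarily distinct) members is not all of `Fin m`. -/
def Sparse (m ℓ : ℕ) {ι : Type*} (S : ι → Finset (Fin m)) : Prop :=
  ∀ g : Fin (ℓ - 1) → ι,
    (Finset.univ.sup fun t => S (g t)) ≠ (Finset.univ : Finset (Fin m))

/-- A `k`-width-family of `Fin m`. -/
structure WidthFamily (m k : ℕ) where
  G : Fin k → Finset (Fin m)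
  H : Fin 2 → Fin k → Fin k → Finset (Fin m)
  H0_sub : ∀ i j, H 0 i j ⊆ (G i)ᶜ
  H1_sub : ∀ i j, H 1 i j ⊆ G i

/-- The collection `F[b, C]` of `k²` bundles. -/
def WidthFamily.coll {m k : ℕ} (F : WidthFamily m k)
    (b : Fin k → Fin 2) (C : Fin k → Fin k → Fin 2) :
    Fin k × Fin k → Finset (Fin m) := fun p =>
  if b p.1 = 0 then
    if C p.1 p.2 = 0 then F.G p.1 ∪ F.H 0 p.1 p.2
    else F.G p.1 ∪ ((F.G p.1)ᶜ \ F.H 0 p.1 p.2)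
  else
    if C p.1 p.2 = 0 then (F.G p.1)ᶜ ∪ F.H 1 p.1 p.2
    else (F.G p.1)ᶜ ∪ (F.G p.1 \ F.H 1 p.1 p.2)

/-- `F` is `ℓ`-independent if `F[b, C]` is `ℓ`-sparse for every `b` and `C`. -/
def WidthFamily.Independent {m k : ℕ} (F : WidthFamily m k) (ℓ : ℕ) : Prop :=
  ∀ (b : Fin k → Fin 2) (C : Fin k → Fin k → Fin 2), Sparse m ℓ (F.coll b C)

/-- The cover number `σ_S(X)`: the least number of members of the collection `S` needed to
cover `X`, if `X` is contained in the union of all members, and `max ℓ d` otherwise (where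
`d` is the number of members). -/
noncomputable def coverNum (m ℓ : ℕ) {ι : Type*} [Fintype ι]
    (S : ι → Finset (Fin m)) (X : Finset (Fin m)) : ℕ :=
  if X ⊆ Finset.univ.sup S then
    sInf {n | ∃ Y : Finset ι, X ⊆ Y.sup S ∧ Y.card = n}
  else max ℓ (Fintype.card ι)

/-- The modified set-cover valuation `v_S^ℓ`. -/
noncomputable def vSl (m ℓ : ℕ) {ι : Type*} [Fintype ι]
    (S : ι → Finset (Fin m)) (X : Finset (Fin m)) : ℝ :=
  if (coverNum m ℓ S X : ℝ) < (ℓ : ℝ) / 2 then (coverNum m ℓ S X : ℝ)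
  else if (coverNum m ℓ S Xᶜ : ℝ) < (ℓ : ℝ) / 2 then (ℓ : ℝ) - (coverNum m ℓ S Xᶜ : ℝ)
  else (ℓ : ℝ) / 2

/-- A valuation is single-minded if there are `w ≥ 0` and a bundle `T` such that it is
`w` on bundles containing `T` and `0` otherwise. -/
def IsSingleMinded {m : ℕ} (v : Finset (Fin m) → ℝ) : Prop :=
  ∃ (w : ℝ) (T : Finset (Fin m)), 0 ≤ w ∧ ∀ S : Finset (Fin m), v S = if T ⊆ S then w else 0

section CoverNum

variable {m ℓ : ℕ} {ι : Type*} {S : ι → Finset (Fin m)}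

lemma Sparse.sup_ne_univ (hS : Sparse m ℓ S) {Y : Finset ι} (hY : Y.Nonempty)
    (hcard : Y.card ≤ ℓ - 1) : Y.sup S ≠ Finset.univ := by
  classical
  have : Nonempty Y := hY.to_subtype
  -- `invFun` of an embedding `Y ↪ Fin (ℓ - 1)` enumerates `Y` with repetitions.
  set e : Y → Fin (ℓ - 1) := Fin.castLE hcard ∘ Y.equivFin
  have he : Function.Injective e := (Fin.castLE_injective hcard).comp Y.equivFin.injective
  convert hS (fun t => (Function.invFun e t).1) using 1
  rw [← Finset.sup_attach, ← Finset.univ_eq_attach,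
    ← Finset.image_univ_of_surjective (Function.invFun_surjective he), Finset.sup_image]
  rfl

variable [Fintype ι]

lemma coverNum_le_card {X : Finset (Fin m)} {Y : Finset ι} (h : X ⊆ Y.sup S) :
    coverNum m ℓ S X ≤ Y.card := by
  rw [coverNum, if_pos (h.trans (Finset.sup_mono (Finset.subset_univ Y)))]
  exact Nat.sInf_le ⟨Y, h, rfl⟩

lemma exists_card_eq_coverNum {X : Finset (Fin m)} (h : X ⊆ Finset.univ.sup S) :
    ∃ Y : Finset ι, X ⊆ Y.sup S ∧ Y.card = coverNum m ℓ S X := by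
  have hne : {n | ∃ Y : Finset ι, X ⊆ Y.sup S ∧ Y.card = n}.Nonempty := ⟨_, _, h, rfl⟩
  rw [coverNum, if_pos h]
  exact Nat.sInf_mem hne

lemma coverNum_mono {X Y : Finset (Fin m)} (hXY : X ⊆ Y) :
    coverNum m ℓ S X ≤ coverNum m ℓ S Y := by
  by_cases hY : Y ⊆ Finset.univ.sup S
  · obtain ⟨Z, hZ, hcard⟩ := exists_card_eq_coverNum (ℓ := ℓ) hY
    exact hcard ▸ coverNum_le_card (hXY.trans hZ)
  · conv_rhs => rw [coverNum, if_neg hY]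
    by_cases hX : X ⊆ Finset.univ.sup S
    · exact (coverNum_le_card hX).trans (le_max_right _ _)
    · rw [coverNum, if_neg hX]

lemma Sparse.coverNum_compl_ge (hS : Sparse m ℓ S) (p : ι) :
    ℓ - 1 ≤ coverNum m ℓ S (S p)ᶜ := by
  classical
  by_cases hcov : (S p)ᶜ ⊆ Finset.univ.sup S
  · obtain ⟨Z, hZ, hcard⟩ := exists_card_eq_coverNum (ℓ := ℓ) hcov
    have hcover : (insert p Z).sup S = Finset.univ := by
      rw [← Finset.univ_subset_iff, Finset.sup_insert, ← Finset.union_compl (S p)]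
      exact Finset.union_subset_union le_rfl hZ
    have hinsert := Finset.card_insert_le p Z
    have hlarge := mt (hS.sup_ne_univ (Finset.insert_nonempty p Z)) (not_not.mpr hcover)
    omega
  · rw [coverNum, if_neg hcov]
    omega

end CoverNum

section Valuation

variable {m ℓ : ℕ} {ι : Type*} [Fintype ι] {S : ι → Finset (Fin m)}

lemma vSl_add_vSl_le_of_disjoint {X Y : Finset (Fin m)} (hXY : Disjoint X Y) :
    vSl m ℓ S X + vSl m ℓ S Y ≤ ℓ := by
  have hX : (coverNum m ℓ S X : ℝ) ≤ coverNum m ℓ S Yᶜ :=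
    mod_cast coverNum_mono (Finset.subset_compl_iff_disjoint_right.mpr hXY)
  have hY : (coverNum m ℓ S Y : ℝ) ≤ coverNum m ℓ S Xᶜ :=
    mod_cast coverNum_mono (Finset.subset_compl_iff_disjoint_right.mpr hXY.symm)
  unfold vSl
  split_ifs <;> linarith

lemma vSl_eq_sub_of_coverNum {X : Finset (Fin m)} (hX : (ℓ : ℝ) / 2 ≤ coverNum m ℓ S X)
    (hXc : (coverNum m ℓ S Xᶜ : ℝ) < ℓ / 2) : vSl m ℓ S X = ℓ - coverNum m ℓ S Xᶜ := by
  rw [vSl, if_neg hX.not_gt, if_pos hXc]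

lemma Sparse.vSl_compl_ge (hℓ : 3 ≤ ℓ) (hS : Sparse m ℓ S) (p : ι) :
    (ℓ : ℝ) - 1 ≤ vSl m ℓ S (S p)ᶜ := by
  have hp : coverNum m ℓ S (S p) ≤ 1 := by
    simpa using coverNum_le_card (ℓ := ℓ) (S := S) (Y := {p}) (by simp)
  have hcompl : ((ℓ - 1 : ℕ) : ℝ) ≤ coverNum m ℓ S (S p)ᶜ := mod_cast hS.coverNum_compl_ge p
  have hℓ' : (3 : ℝ) ≤ ℓ := mod_cast hℓ
  have hp' : (coverNum m ℓ S (S p) : ℝ) ≤ 1 := mod_cast hp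
  rw [Nat.cast_sub (by omega), Nat.cast_one] at hcompl
  rw [vSl_eq_sub_of_coverNum (by linarith) (by rw [compl_compl]; linarith), compl_compl]
  linarith

end Valuation

namespace WidthFamily

variable {m k : ℕ} (F : WidthFamily m k) {b : Fin k → Fin 2} {C : Fin k → Fin k → Fin 2}
  {i j : Fin k}

lemma compl_coll_eq_sdiff (hb : b i = 1) (hC : C i j = 0) :
    (F.coll b C (i, j))ᶜ = F.G i \ F.H 1 i j := by
  ext x
  simp [coll, hb, hC]

lemma compl_coll_eq_H (hb : b i = 1) (hC : C i j = 1) :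
    (F.coll b C (i, j))ᶜ = F.H 1 i j := by
  ext x
  have hx := @F.H1_sub i j x
  simp [coll, hb, hC]
  tauto

end WidthFamily

lemma eq_zero_of_utility_max_of_value_lt_price {m : ℕ} {v M : Finset (Fin m) → ℝ} {w : ℝ}
    {T A : Finset (Fin m)} (hv : ∀ S, v S = if T ⊆ S then w else 0) (hw : 0 ≤ w)
    (hM : Monotone M) (hM0 : M ∅ = 0) (hprice : w < M T)
    (hA : ∀ X, v A - M A ≥ v X - M X) : v A = 0 := by
  have hempty : 0 ≤ v A - M A := by
    have := hA ∅
    rw [hM0, hv ∅] at this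
    split_ifs at this <;> linarith
  rw [hv A] at hempty ⊢
  split_ifs at hempty ⊢ with hTA
  · linarith [hM hTA]
  · rfl

theorem high_price_implies_bad_welfare_general
    (m k ℓ : ℕ) (hℓ : 3 ≤ ℓ)
    (F : WidthFamily m k) (hF : F.Independent ℓ)
    (istar jstar : Fin k)
    (b₃ b₄ : Fin k → Fin 2) (C₃ C₄ : Fin k → Fin k → Fin 2)
    (hb₃ : b₃ istar = 1) (hb₄ : b₄ istar = 1)
    (hC₃ : C₃ istar jstar = 0) (hC₄ : C₄ istar jstar = 1)
    (v₃ v₄ : Finset (Fin m) → ℝ)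
    (hv₃ : v₃ = vSl m ℓ (F.coll b₃ C₃)) (hv₄ : v₄ = vSl m ℓ (F.coll b₄ C₄))
    (VA : Set (Finset (Fin m) → ℝ)) (hVA : ∀ v : Finset (Fin m) → ℝ, IsSingleMinded v → v ∈ VA)
    (f : (Finset (Fin m) → ℝ) → (Finset (Fin m) → ℝ) → (Finset (Fin m) → ℝ) →
      Finset (Fin m) × Finset (Fin m) × Finset (Fin m))
    (pA : (Finset (Fin m) → ℝ) → (Finset (Fin m) → ℝ) → (Finset (Fin m) → ℝ) → ℝ)
    (hdisj : ∀ vA vB vC : Finset (Fin m) → ℝ,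
      Disjoint (f vA vB vC).1 (f vA vB vC).2.1 ∧
      Disjoint (f vA vB vC).1 (f vA vB vC).2.2 ∧
      Disjoint (f vA vB vC).2.1 (f vA vB vC).2.2)
    (M : Finset (Fin m) → ℝ)
    (hMmono : ∀ S T : Finset (Fin m), S ⊆ T → M S ≤ M T) (hM0 : M ∅ = 0)
    (hmenu : ∀ vA ∈ VA, pA vA v₃ v₃ = M (f vA v₃ v₃).1 ∧
      ∀ X : Finset (Fin m), vA (f vA v₃ v₃).1 - M (f vA v₃ v₃).1 ≥ vA X - M X)
    (vstar : Finset (Fin m) → ℝ)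
    (hvstar : ∀ S : Finset (Fin m),
      vstar S = if (F.G istar)ᶜ ⊆ S then (Real.sqrt 3 - 1) * ℓ else 0)
    (hprice : (Real.sqrt 3 - 1) * ℓ < M ((F.G istar)ᶜ)) :
    (vstar (f vstar v₃ v₃).1 + v₃ (f vstar v₃ v₃).2.1 + v₃ (f vstar v₃ v₃).2.2 ≤ (ℓ : ℝ)) ∧
    (∃ SA SB SC : Finset (Fin m),
      Disjoint SA SB ∧ Disjoint SA SC ∧ Disjoint SB SC ∧
      (Real.sqrt 3 - 1) * ℓ + 2 * ((ℓ : ℝ) - 1) ≤ vstar SA + v₃ SB + v₄ SC) := by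
  have hw : 0 ≤ (Real.sqrt 3 - 1) * ℓ :=
    mul_nonneg (sub_nonneg.mpr (Real.one_le_sqrt.mpr (by norm_num))) ℓ.cast_nonneg
  obtain ⟨-, hbest⟩ := hmenu vstar (hVA vstar ⟨_, _, hw, hvstar⟩)
  have hA := eq_zero_of_utility_max_of_value_lt_price hvstar hw
    (fun _ _ => hMmono _ _) hM0 hprice hbest
  have hBC := vSl_add_vSl_le_of_disjoint (ℓ := ℓ) (S := F.coll b₃ C₃) (hdisj vstar v₃ v₃).2.2
  rw [← hv₃] at hBC
  have hB : (ℓ : ℝ) - 1 ≤ v₃ (F.G istar \ F.H 1 istar jstar) := by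
    rw [hv₃, ← F.compl_coll_eq_sdiff hb₃ hC₃]
    exact (hF b₃ C₃).vSl_compl_ge hℓ _
  have hC : (ℓ : ℝ) - 1 ≤ v₄ (F.H 1 istar jstar) := by
    rw [hv₄, ← F.compl_coll_eq_H hb₄ hC₄]
    exact (hF b₄ C₄).vSl_compl_ge hℓ _
  refine ⟨by linarith, (F.G istar)ᶜ, F.G istar \ F.H 1 istar jstar, F.H 1 istar jstar,
    disjoint_compl_left.mono_right Finset.sdiff_subset,
    disjoint_compl_left.mono_right (F.H1_sub istar jstar), Finset.sdiff_disjoint, ?_⟩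
  rw [hvstar, if_pos subset_rfl]
  linarith

/-- An expensive menu price on `(G_{i*})ᶜ` forces low welfare against the pair `(v₃, v₃)`
while high welfare is available on the profile `(v*, v₃, v₄)`. -/
theorem high_price_implies_bad_welfare
    (m k ℓ : ℕ) (hm : 0 < m) (hℓ : 3 ≤ ℓ)
    (F : WidthFamily m k) (hF : F.Independent ℓ)
    (hG : ∀ i : Fin k, F.G i ≠ ∅ ∧ F.G i ≠ (Finset.univ : Finset (Fin m)))
    (istar jstar : Fin k)
    (b₃ b₄ : Fin k → Fin 2) (C₃ C₄ : Fin k → Fin k → Fin 2)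
    (hb₃ : b₃ istar = 1) (hb₄ : b₄ istar = 1)
    (hC₃ : C₃ istar jstar = 0) (hC₄ : C₄ istar jstar = 1)
    (v₃ v₄ : Finset (Fin m) → ℝ)
    (hv₃ : v₃ = vSl m ℓ (F.coll b₃ C₃)) (hv₄ : v₄ = vSl m ℓ (F.coll b₄ C₄))
    (VA : Set (Finset (Fin m) → ℝ)) (hVA : ∀ v : Finset (Fin m) → ℝ, IsSingleMinded v → v ∈ VA)
    (f : (Finset (Fin m) → ℝ) → (Finset (Fin m) → ℝ) → (Finset (Fin m) → ℝ) →
      Finset (Fin m) × Finset (Fin m) × Finset (Fin m))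
    (pA pB pC : (Finset (Fin m) → ℝ) → (Finset (Fin m) → ℝ) → (Finset (Fin m) → ℝ) → ℝ)
    (hdisj : ∀ vA vB vC : Finset (Fin m) → ℝ,
      Disjoint (f vA vB vC).1 (f vA vB vC).2.1 ∧
      Disjoint (f vA vB vC).1 (f vA vB vC).2.2 ∧
      Disjoint (f vA vB vC).2.1 (f vA vB vC).2.2)
    (M : Finset (Fin m) → ℝ)
    (hMmono : ∀ S T : Finset (Fin m), S ⊆ T → M S ≤ M T) (hM0 : M ∅ = 0)
    (hmenu : ∀ vA ∈ VA, pA vA v₃ v₃ = M (f vA v₃ v₃).1 ∧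
      ∀ X : Finset (Fin m), vA (f vA v₃ v₃).1 - M (f vA v₃ v₃).1 ≥ vA X - M X)
    (vstar : Finset (Fin m) → ℝ)
    (hvstar : ∀ S : Finset (Fin m),
      vstar S = if (F.G istar)ᶜ ⊆ S then (Real.sqrt 3 - 1) * ℓ else 0)
    (hprice : (Real.sqrt 3 - 1) * ℓ < M ((F.G istar)ᶜ)) :
    (vstar (f vstar v₃ v₃).1 + v₃ (f vstar v₃ v₃).2.1 + v₃ (f vstar v₃ v₃).2.2 ≤ (ℓ : ℝ)) ∧
    (∃ SA SB SC : Finset (Fin m),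
      Disjoint SA SB ∧ Disjoint SA SC ∧ Disjoint SB SC ∧
      (Real.sqrt 3 - 1) * ℓ + 2 * ((ℓ : ℝ) - 1) ≤ vstar SA + v₃ SB + v₄ SC) :=
  high_price_implies_bad_welfare_general m k ℓ hℓ F hF istar jstar b₃ b₄ C₃ C₄ hb₃ hb₄ hC₃ hC₄ v₃ v₄
    hv₃ hv₄ VA hVA f pA hdisj M hMmono hM0 hmenu vstar hvstar hprice
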